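/- arXiv:1305.2639 — 3 statements merged into one kernel-verified Lean document; each statement's English description precedes it below -/
import Mathlib

section
/- If φ₀ is a weakly differentiable function with ∇φ₀ + φ₀X = 0 almost everywhere and ‖∇φ₀‖ < ∞, then ‖∇φ₀‖² = ‖φ₀X‖² = (1/2)∫ div(X)|φ₀|² dx. -/
open MeasureTheory
open scoped RealInnerProductSpace Topology

noncomputable def vdiv {n : ℕ} (X : EuclideanSpace ℝ (Fin n) → EuclideanSpace ℝ (Fin n))
    (x : EuclideanSpace ℝ (Fin n)) : ℝ :=
  ∑ i, fderiv ℝ X x (EuclideanSpace.single i 1) i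

set_option maxHeartbeats 1000000 in
theorem stmt_2 {n : ℕ} (φ₀ : EuclideanSpace ℝ (Fin n) → ℝ)
    (X : EuclideanSpace ℝ (Fin n) → EuclideanSpace ℝ (Fin n))
    (hX : ContDiff ℝ 1 X)
    (hφ₀ : Differentiable ℝ φ₀)
    (hL2 : MemLp φ₀ 2 (volume : Measure (EuclideanSpace ℝ (Fin n))))
    (heq : ∀ᵐ x, gradient φ₀ x + φ₀ x • X x = 0)
    (hgrad : Integrable (fun x => ‖gradient φ₀ x‖ ^ 2))
    (hdiv : Integrable (fun x => vdiv X x * (φ₀ x) ^ 2)) :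
    (∫ x, ‖gradient φ₀ x‖ ^ 2) = (∫ x, (φ₀ x) ^ 2 * ‖X x‖ ^ 2) ∧
    (∫ x, ‖gradient φ₀ x‖ ^ 2) = (1 / 2) * ∫ x, vdiv X x * (φ₀ x) ^ 2 := by
  let e : Fin n → EuclideanSpace ℝ (Fin n) := fun i => EuclideanSpace.single i 1
  have hXd : Differentiable ℝ X := hX.differentiable one_ne_zero
  have hXc : Continuous X := hXd.continuous
  have hφc : Continuous φ₀ := hφ₀.continuous
  have hfg : ∀ (x v : EuclideanSpace ℝ (Fin n)), fderiv ℝ φ₀ x v = ⟪gradient φ₀ x, v⟫ := by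
    intro x v; simp [gradient, InnerProductSpace.toDual_symm_apply]
  have heq' : ∀ᵐ x, gradient φ₀ x = -(φ₀ x • X x) := by
    filter_upwards [heq] with x hx
    exact eq_neg_of_add_eq_zero_left hx
  have hnorm : (fun x => ‖gradient φ₀ x‖ ^ 2) =ᵐ[volume]
      (fun x => (φ₀ x) ^ 2 * ‖X x‖ ^ 2) := by
    filter_upwards [heq'] with x hx
    rw [hx, norm_neg, norm_smul, mul_pow]
    simp [sq_abs]
  have first : (∫ x, ‖gradient φ₀ x‖ ^ 2) = ∫ x, (φ₀ x) ^ 2 * ‖X x‖ ^ 2 :=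
    integral_congr_ae hnorm
  have hPhiX2 : Integrable (fun x => (φ₀ x) ^ 2 * ‖X x‖ ^ 2) := hgrad.congr hnorm
  have hφ2 : Integrable (fun x => (φ₀ x) ^ 2) := hL2.integrable_sq
  -- coordinate functions of X
  have hXi : ∀ i : Fin n, Differentiable ℝ (fun x => X x i) := fun i =>
    (EuclideanSpace.proj (𝕜 := ℝ) i).differentiable.comp hXd
  have hXifd : ∀ (i : Fin n) x, fderiv ℝ (fun y => X y i) x
      = (EuclideanSpace.proj (𝕜 := ℝ) i).comp (fderiv ℝ X x) := fun i x =>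
    ((EuclideanSpace.proj (𝕜 := ℝ) i).hasFDerivAt.comp x (hXd x).hasFDerivAt).fderiv
  -- the vector field Y i = φ₀² * X_i
  have hYd : ∀ i, Differentiable ℝ (fun x => (φ₀ x) ^ 2 * X x i) :=
    fun i => (hφ₀.pow 2).mul (hXi i)
  have hYc : ∀ i, Continuous (fun x => (φ₀ x) ^ 2 * X x i) :=
    fun i => (hφc.pow 2).mul ((EuclideanSpace.proj (𝕜 := ℝ) i).continuous.comp hXc)
  -- everywhere derivative of Y i
  have hYfd : ∀ (i : Fin n) x, fderiv ℝ (fun y => (φ₀ y) ^ 2 * X y i) x (e i)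
      = 2 * φ₀ x * fderiv ℝ φ₀ x (e i) * X x i + (φ₀ x) ^ 2 * fderiv ℝ X x (e i) i := by
    intro i x
    have hfun : (fun y => φ₀ y ^ 2 * X y i) = fun y => (φ₀ y * φ₀ y) * X y i := by
      funext y; ring
    have h1 : HasFDerivAt (fun y => φ₀ y * φ₀ y)
        (φ₀ x • fderiv ℝ φ₀ x + φ₀ x • fderiv ℝ φ₀ x) x :=
      (hφ₀ x).hasFDerivAt.mul (hφ₀ x).hasFDerivAt
    have h2 : HasFDerivAt (fun y => X y i)
        ((EuclideanSpace.proj (𝕜 := ℝ) i).comp (fderiv ℝ X x)) x :=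
      (EuclideanSpace.proj (𝕜 := ℝ) i).hasFDerivAt.comp x (hXd x).hasFDerivAt
    rw [hfun, HasFDerivAt.fderiv (f := fun y => φ₀ y * φ₀ y * X y i) (h1.mul h2)]
    simp
    ring
  -- a.e. coordinate identity for fderiv φ₀
  have hcoord : ∀ᵐ x, ∀ i : Fin n, fderiv ℝ φ₀ x (e i) = -(φ₀ x * X x i) := by
    filter_upwards [heq'] with x hx i
    rw [hfg, hx]
    simp only [inner_neg_left, real_inner_smul_left, neg_inj, mul_eq_mul_left_iff]
    left
    simp [e, EuclideanSpace.inner_single_right]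
  -- continuous a.e. representative of div (Y i)
  have hdXc : ∀ i : Fin n, Continuous fun x => fderiv ℝ X x (e i) i := by
    intro i
    exact (EuclideanSpace.proj (𝕜 := ℝ) i).continuous.comp
      ((ContinuousLinearMap.apply ℝ (EuclideanSpace ℝ (Fin n)) (e i)).continuous.comp
        (hX.continuous_fderiv one_ne_zero))
  have hgc : ∀ i : Fin n, Continuous (fun x =>
      (φ₀ x) ^ 2 * fderiv ℝ X x (e i) i - 2 * (φ₀ x) ^ 2 * (X x i) ^ 2) := by
    intro i
    have := hdXc i
    have h2 : Continuous fun x => X x i := (EuclideanSpace.proj (𝕜 := ℝ) i).continuous.comp hXc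
    fun_prop
  have hgae : ∀ i : Fin n, (fun x => fderiv ℝ (fun y => (φ₀ y) ^ 2 * X y i) x (e i)) =ᵐ[volume]
      (fun x => (φ₀ x) ^ 2 * fderiv ℝ X x (e i) i - 2 * (φ₀ x) ^ 2 * (X x i) ^ 2) := by
    intro i
    filter_upwards [hcoord] with x hx
    rw [hYfd i x, hx i]
    ring
  -- sum of g equals the divergence expression
  have hgsum : ∀ x, (∑ i, ((φ₀ x) ^ 2 * fderiv ℝ X x (e i) i - 2 * (φ₀ x) ^ 2 * (X x i) ^ 2))
      = vdiv X x * (φ₀ x) ^ 2 - 2 * ((φ₀ x) ^ 2 * ‖X x‖ ^ 2) := by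
    intro x
    have hn : ‖X x‖ ^ 2 = ∑ i, (X x i) ^ 2 := by
      rw [EuclideanSpace.norm_eq, Real.sq_sqrt (by positivity)]
      simp [sq_abs]
    rw [Finset.sum_sub_distrib, ← Finset.mul_sum, ← Finset.mul_sum, hn, vdiv]
    ring
  -- coordinate bound
  have habs : ∀ (v : EuclideanSpace ℝ (Fin n)) (i : Fin n), |v i| ≤ ‖v‖ := by
    intro v i
    have h := abs_real_inner_le_norm v (e i)
    rwa [EuclideanSpace.inner_single_right, RCLike.conj_to_real, one_mul,
      EuclideanSpace.norm_single, norm_one, mul_one] at h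
  -- integrability of Y i
  have hYint : ∀ i : Fin n, Integrable (fun x => (φ₀ x) ^ 2 * X x i) := by
    intro i
    refine Integrable.mono' ((hφ2.add hgrad).div_const 2) (hYc i).aestronglyMeasurable ?_
    filter_upwards [heq'] with x hx
    have h1 : |φ₀ x * X x i| ≤ ‖gradient φ₀ x‖ := by
      rw [hx, norm_neg]
      have : φ₀ x * X x i = (φ₀ x • X x) i := rfl
      rw [this]
      exact habs _ i
    have h2 : ‖(φ₀ x) ^ 2 * X x i‖ = |φ₀ x| * |φ₀ x * X x i| := by
      rw [Real.norm_eq_abs, ← abs_mul]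
      ring_nf
    rw [h2]
    simp only [Pi.add_apply]
    have h3 := abs_nonneg (φ₀ x)
    nlinarith [sq_abs (φ₀ x), norm_nonneg (gradient φ₀ x), sq_nonneg (|φ₀ x| - ‖gradient φ₀ x‖)]
  -- bump function cutoff
  let χ : ContDiffBump (0 : EuclideanSpace ℝ (Fin n)) := ⟨1, 2, one_pos, one_lt_two⟩
  have hχd : Differentiable ℝ ↑χ := (χ.contDiff (n := 1)).differentiable one_ne_zero
  have hχfc : Continuous (fderiv ℝ ↑χ) := (χ.contDiff (n := 1)).continuous_fderiv (by simp)
  obtain ⟨M, hM⟩ : ∃ M, ∀ x, ‖fderiv ℝ (↑χ : EuclideanSpace ℝ (Fin n) → ℝ) x‖ ≤ M :=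
    HasCompactSupport.exists_bound_of_continuous (χ.hasCompactSupport.fderiv (𝕜 := ℝ)) hχfc
  let c : ℕ → ℝ := fun k => ((k : ℝ) + 1)⁻¹
  have hc_pos : ∀ k, 0 < c k := fun k => by positivity
  have hc0 : Filter.Tendsto c Filter.atTop (nhds 0) := by
    have := tendsto_one_div_add_atTop_nhds_zero_nat (𝕜 := ℝ)
    simpa [c, one_div] using this
  let χk : ℕ → EuclideanSpace ℝ (Fin n) → ℝ := fun k x => χ (c k • x)
  have hχk_fd : ∀ k x, HasFDerivAt (χk k)
      (c k • fderiv ℝ (↑χ : EuclideanSpace ℝ (Fin n) → ℝ) (c k • x)) x := by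
    intro k x
    have hg : HasFDerivAt (fun y : EuclideanSpace ℝ (Fin n) => c k • y)
        (c k • ContinuousLinearMap.id ℝ (EuclideanSpace ℝ (Fin n))) x := by
      exact (hasFDerivAt_id x).const_smul (c k)
    have h := (hχd (c k • x)).hasFDerivAt.comp x hg
    refine h.congr_fderiv ?_
    ext v
    simp [ContinuousLinearMap.smul_apply]
  have hχk_diff : ∀ k, Differentiable ℝ (χk k) := fun k x => (hχk_fd k x).differentiableAt
  have hχk_fderiv : ∀ k x, fderiv ℝ (χk k) x
      = c k • fderiv ℝ (↑χ : EuclideanSpace ℝ (Fin n) → ℝ) (c k • x) :=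
    fun k x => (hχk_fd k x).fderiv
  have hχk_supp : ∀ k, HasCompactSupport (χk k) := by
    intro k
    exact χ.hasCompactSupport.comp_homeomorph (Homeomorph.smulOfNeZero (c k) (hc_pos k).ne')
  have hχk_cont : ∀ k, Continuous (χk k) := fun k => (hχk_diff k).continuous
  have hdχk_cont : ∀ (k) (i : Fin n), Continuous fun x => fderiv ℝ (χk k) x (e i) := by
    intro k i
    simp only [hχk_fderiv, ContinuousLinearMap.smul_apply]
    have h1 : Continuous fun x : EuclideanSpace ℝ (Fin n) =>
        fderiv ℝ (↑χ : EuclideanSpace ℝ (Fin n) → ℝ) (c k • x) :=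
      hχfc.comp (continuous_const_smul (c k))
    exact (h1.clm_apply continuous_const).const_smul (c k)
  have hdχk_bound : ∀ (k) (i : Fin n) x, |fderiv ℝ (χk k) x (e i)| ≤ c k * M := by
    intro k i x
    rw [hχk_fderiv]
    simp only [ContinuousLinearMap.smul_apply, smul_eq_mul, abs_mul,
      abs_of_pos (hc_pos k)]
    refine mul_le_mul_of_nonneg_left ?_ (hc_pos k).le
    calc |fderiv ℝ (↑χ : EuclideanSpace ℝ (Fin n) → ℝ) (c k • x) (e i)|
        ≤ ‖fderiv ℝ (↑χ : EuclideanSpace ℝ (Fin n) → ℝ) (c k • x)‖ * ‖e i‖ :=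
          (fderiv ℝ (↑χ : EuclideanSpace ℝ (Fin n) → ℝ) (c k • x)).le_opNorm (e i)
      _ ≤ M := by
          have : ‖e i‖ = 1 := by simp [e, EuclideanSpace.norm_single]
          rw [this, mul_one]; exact hM _
  -- integrability of the three products, for each k and i
  have hIdYχ : ∀ (k) (i : Fin n), Integrable
      (fun x => fderiv ℝ (fun y => (φ₀ y) ^ 2 * X y i) x (e i) * χk k x) := by
    intro k i
    have hint : Integrable (fun x =>
        ((φ₀ x) ^ 2 * fderiv ℝ X x (e i) i - 2 * (φ₀ x) ^ 2 * (X x i) ^ 2) * χk k x) :=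
      ((hgc i).mul (hχk_cont k)).integrable_of_hasCompactSupport ((hχk_supp k).mul_left)
    refine hint.congr ?_
    filter_upwards [hgae i] with x hx
    rw [hx]
  have hIYdχ : ∀ (k) (i : Fin n), Integrable
      (fun x => ((φ₀ x) ^ 2 * X x i) * fderiv ℝ (χk k) x (e i)) := by
    intro k i
    refine ((hYc i).mul (hdχk_cont k i)).integrable_of_hasCompactSupport ?_
    exact HasCompactSupport.mul_left ((hχk_supp k).fderiv_apply (𝕜 := ℝ) (e i))
  have hIYχ : ∀ (k) (i : Fin n), Integrable (fun x => ((φ₀ x) ^ 2 * X x i) * χk k x) :=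
    fun k i => ((hYc i).mul (hχk_cont k)).integrable_of_hasCompactSupport
      ((hχk_supp k).mul_left)
  -- integration by parts
  have hIBP : ∀ (k) (i : Fin n),
      ∫ x, ((φ₀ x) ^ 2 * X x i) * fderiv ℝ (χk k) x (e i)
        = -∫ x, fderiv ℝ (fun y => (φ₀ y) ^ 2 * X y i) x (e i) * χk k x :=
    fun k i => integral_mul_fderiv_eq_neg_fderiv_mul_of_integrable
      (hIdYχ k i) (hIYdχ k i) (hIYχ k i) (fun x _ => hYd i x) (fun x _ => hχk_diff k x)
  -- the key identity for each k
  have hTk : ∀ k, ∫ x, (vdiv X x * (φ₀ x) ^ 2 - 2 * ((φ₀ x) ^ 2 * ‖X x‖ ^ 2)) * χk k x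
      = -∑ i, ∫ x, ((φ₀ x) ^ 2 * X x i) * fderiv ℝ (χk k) x (e i) := by
    intro k
    have h1 : ∀ x, (vdiv X x * (φ₀ x) ^ 2 - 2 * ((φ₀ x) ^ 2 * ‖X x‖ ^ 2)) * χk k x
        = ∑ i, ((φ₀ x) ^ 2 * fderiv ℝ X x (e i) i - 2 * (φ₀ x) ^ 2 * (X x i) ^ 2) * χk k x := by
      intro x
      rw [← Finset.sum_mul, hgsum]
    have h2 : ∀ i : Fin n, Integrable (fun x =>
        ((φ₀ x) ^ 2 * fderiv ℝ X x (e i) i - 2 * (φ₀ x) ^ 2 * (X x i) ^ 2) * χk k x) :=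
      fun i => ((hgc i).mul (hχk_cont k)).integrable_of_hasCompactSupport ((hχk_supp k).mul_left)
    calc ∫ x, (vdiv X x * (φ₀ x) ^ 2 - 2 * ((φ₀ x) ^ 2 * ‖X x‖ ^ 2)) * χk k x
        = ∫ x, ∑ i, ((φ₀ x) ^ 2 * fderiv ℝ X x (e i) i
            - 2 * (φ₀ x) ^ 2 * (X x i) ^ 2) * χk k x := by
          exact integral_congr_ae (Filter.Eventually.of_forall h1)
      _ = ∑ i, ∫ x, ((φ₀ x) ^ 2 * fderiv ℝ X x (e i) i
            - 2 * (φ₀ x) ^ 2 * (X x i) ^ 2) * χk k x := integral_finset_sum _ (fun i _ => h2 i)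
      _ = ∑ i, ∫ x, fderiv ℝ (fun y => (φ₀ y) ^ 2 * X y i) x (e i) * χk k x := by
          refine Finset.sum_congr rfl fun i _ => ?_
          refine integral_congr_ae ?_
          filter_upwards [hgae i] with x hx
          rw [hx]
      _ = -∑ i, ∫ x, ((φ₀ x) ^ 2 * X x i) * fderiv ℝ (χk k) x (e i) := by
          rw [← Finset.sum_neg_distrib]
          refine Finset.sum_congr rfl fun i _ => ?_
          rw [hIBP k i, neg_neg]
  -- limit of the left-hand side : dominated convergence
  have hDint : Integrable (fun x => vdiv X x * (φ₀ x) ^ 2 - 2 * ((φ₀ x) ^ 2 * ‖X x‖ ^ 2)) :=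
    hdiv.sub (hPhiX2.const_mul 2)
  have hlimL : Filter.Tendsto
      (fun k => ∫ x, (vdiv X x * (φ₀ x) ^ 2 - 2 * ((φ₀ x) ^ 2 * ‖X x‖ ^ 2)) * χk k x)
      Filter.atTop (nhds (∫ x, (vdiv X x * (φ₀ x) ^ 2 - 2 * ((φ₀ x) ^ 2 * ‖X x‖ ^ 2)))) := by
    refine tendsto_integral_of_dominated_convergence
      (fun x => |vdiv X x * (φ₀ x) ^ 2 - 2 * ((φ₀ x) ^ 2 * ‖X x‖ ^ 2)|)
      (fun k => (hDint.aestronglyMeasurable.mul (hχk_cont k).aestronglyMeasurable)) ?_ ?_ ?_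
    · simpa using hDint.abs
    · intro k
      refine Filter.Eventually.of_forall fun x => ?_
      rw [Real.norm_eq_abs, abs_mul]
      have h1 : |χk k x| ≤ 1 := by
        rw [abs_of_nonneg χ.nonneg]; exact χ.le_one
      nlinarith [abs_nonneg (vdiv X x * (φ₀ x) ^ 2 - 2 * ((φ₀ x) ^ 2 * ‖X x‖ ^ 2))]
    · refine Filter.Eventually.of_forall fun x => ?_
      have hev : ∀ᶠ k in Filter.atTop, χk k x = 1 := by
        filter_upwards [Filter.eventually_ge_atTop ⌈‖x‖⌉₊] with k hk
        refine χ.one_of_mem_closedBall ?_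
        rw [Metric.mem_closedBall, dist_zero_right, norm_smul, Real.norm_eq_abs,
          abs_of_pos (hc_pos k)]
        have hrIn : χ.rIn = 1 := rfl
        rw [hrIn, inv_mul_le_iff₀ (by positivity), mul_one]
        calc ‖x‖ ≤ ⌈‖x‖⌉₊ := Nat.le_ceil _
          _ ≤ (k : ℝ) := by exact_mod_cast hk
          _ ≤ (k : ℝ) + 1 := by linarith
      refine Filter.Tendsto.congr' ?_ tendsto_const_nhds
      filter_upwards [hev] with k hk
      rw [hk, mul_one]
  -- limit of the right-hand side : each term tends to 0
  have hlimR : ∀ i : Fin n, Filter.Tendsto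
      (fun k => ∫ x, ((φ₀ x) ^ 2 * X x i) * fderiv ℝ (χk k) x (e i))
      Filter.atTop (nhds 0) := by
    intro i
    have key : ∀ k, ‖∫ x, ((φ₀ x) ^ 2 * X x i) * fderiv ℝ (χk k) x (e i)‖
        ≤ (∫ x, ‖(φ₀ x) ^ 2 * X x i‖) * (c k * M) := by
      intro k
      calc ‖∫ x, ((φ₀ x) ^ 2 * X x i) * fderiv ℝ (χk k) x (e i)‖
          ≤ ∫ x, ‖((φ₀ x) ^ 2 * X x i) * fderiv ℝ (χk k) x (e i)‖ :=
            norm_integral_le_integral_norm _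
        _ ≤ ∫ x, ‖(φ₀ x) ^ 2 * X x i‖ * (c k * M) := by
            refine integral_mono (hIYdχ k i).norm ((hYint i).norm.mul_const _) fun x => ?_
            rw [norm_mul]
            refine mul_le_mul_of_nonneg_left ?_ (norm_nonneg _)
            rw [Real.norm_eq_abs]
            exact hdχk_bound k i x
        _ = (∫ x, ‖(φ₀ x) ^ 2 * X x i‖) * (c k * M) := integral_mul_const _ _
    refine squeeze_zero_norm key ?_
    have : Filter.Tendsto (fun k => (∫ x, ‖(φ₀ x) ^ 2 * X x i‖) * (c k * M))
        Filter.atTop (nhds ((∫ x, ‖(φ₀ x) ^ 2 * X x i‖) * (0 * M))) :=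
      Filter.Tendsto.const_mul _ (hc0.mul_const M)
    simpa using this
  -- conclude : the integral of the divergence expression is zero
  have hzero : ∫ x, (vdiv X x * (φ₀ x) ^ 2 - 2 * ((φ₀ x) ^ 2 * ‖X x‖ ^ 2)) = 0 := by
    have h2 : Filter.Tendsto
        (fun k => ∫ x, (vdiv X x * (φ₀ x) ^ 2 - 2 * ((φ₀ x) ^ 2 * ‖X x‖ ^ 2)) * χk k x)
        Filter.atTop (nhds 0) := by
      have := Filter.Tendsto.neg (tendsto_finset_sum Finset.univ (fun i _ => hlimR i))
      simp only [neg_zero, Finset.sum_const_zero] at this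
      refine Filter.Tendsto.congr (fun k => (hTk k).symm) this
    exact tendsto_nhds_unique hlimL h2
  have key : ∫ x, vdiv X x * (φ₀ x) ^ 2 = 2 * ∫ x, (φ₀ x) ^ 2 * ‖X x‖ ^ 2 := by
    rw [integral_sub hdiv (hPhiX2.const_mul 2), integral_const_mul, sub_eq_zero] at hzero
    exact hzero
  refine ⟨first, ?_⟩
  rw [first, key]
  ring
end

section
/- Suppose φ₀ is a C² solution of ∇φ₀ + φ₀X = 0 on ℝⁿ with X a C¹ vector field, P a harmonic homogeneous polynomial, and W a continuous function with 2⟨∇P(x), X(x)⟩ + W(x)P(x) = 0 for all x. Then φ_P = P·φ₀ satisfies −Δφ_P + (W + |X|² − div X)φ_P = 0 pointwise on ℝⁿ. -/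
open MeasureTheory RealInnerProductSpace

noncomputable def lap {n : ℕ} (f : EuclideanSpace ℝ (Fin n) → ℝ)
    (x : EuclideanSpace ℝ (Fin n)) : ℝ :=
  ∑ i, fderiv ℝ (fun y => fderiv ℝ f y (EuclideanSpace.single i 1)) x (EuclideanSpace.single i 1)

theorem stmt_4 {n : ℕ} (φ₀ P W : EuclideanSpace ℝ (Fin n) → ℝ)
    (X : EuclideanSpace ℝ (Fin n) → EuclideanSpace ℝ (Fin n)) (k : ℕ)
    (hφ₀ : ContDiff ℝ 2 φ₀) (hX : ContDiff ℝ 1 X) (hW : Continuous W)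
    (hP : ContDiff ℝ (⊤ : ℕ∞) P)
    (hPhom : ∀ (c : ℝ) x, P (c • x) = c ^ k * P x)
    (hPharm : ∀ x, lap P x = 0)
    (heq : ∀ x, gradient φ₀ x + φ₀ x • X x = 0)
    (hPW : ∀ x, 2 * ⟪gradient P x, X x⟫ + W x * P x = 0) :
    ∀ x, -lap (fun y => P y * φ₀ y) x
        + (W x + ‖X x‖ ^ 2 - vdiv X x) * (P x * φ₀ x) = 0 := by
  intro x
  have key : ∀ (f : EuclideanSpace ℝ (Fin n) → ℝ) y (v : EuclideanSpace ℝ (Fin n)),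
      fderiv ℝ f y v = ⟪gradient f y, v⟫ := fun f y v => by
    rw [gradient, ← InnerProductSpace.toDual_apply_apply, LinearIsometryEquiv.apply_symm_apply]
  have hPd : Differentiable ℝ P := hP.differentiable (by simp)
  have hφd : Differentiable ℝ φ₀ := hφ₀.differentiable two_ne_zero
  have hXd : Differentiable ℝ X := hX.differentiable one_ne_zero
  have hgrad : ∀ y, gradient φ₀ y = (-(φ₀ y)) • X y := fun y => by
    rw [neg_smul, eq_neg_iff_add_eq_zero]; exact heq y
  have hdphi : ∀ y i, fderiv ℝ φ₀ y (EuclideanSpace.single i 1) = -(φ₀ y * X y i) := by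
    intro y i
    rw [key, hgrad, real_inner_smul_left]
    simp [EuclideanSpace.inner_single_right]
  have hXi : ∀ i, Differentiable ℝ (fun y => X y i) := fun i =>
    (EuclideanSpace.proj (𝕜 := ℝ) i).differentiable.comp hXd
  have hdX : ∀ i, fderiv ℝ (fun y => X y i) x (EuclideanSpace.single i 1)
      = fderiv ℝ X x (EuclideanSpace.single i 1) i := fun i => by
    have h := ((EuclideanSpace.proj (𝕜 := ℝ) i).hasFDerivAt.comp x (hXd x).hasFDerivAt).fderiv
    have h2 : (fun y => X y i) = (⇑(EuclideanSpace.proj (𝕜 := ℝ) i) ∘ X) := rfl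
    rw [h2, h]; rfl
  have hA : ∀ i, Differentiable ℝ (fun y => fderiv ℝ P y (EuclideanSpace.single i 1)) := by
    intro i
    have h1 : ContDiff ℝ (⊤ : ℕ∞) (fderiv ℝ P) := hP.fderiv_right (mod_cast le_top)
    exact (h1.differentiable (by simp)).clm_apply (differentiable_const _)
  have hfun : ∀ i, (fun y => fderiv ℝ (fun z => P z * φ₀ z) y (EuclideanSpace.single i 1))
      = (fun y => φ₀ y * fderiv ℝ P y (EuclideanSpace.single i 1) - P y * (φ₀ y * X y i)) := by
    intro i; funext y
    rw [fderiv_fun_mul (hPd y) (hφd y)]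
    simp only [ContinuousLinearMap.add_apply, ContinuousLinearMap.smul_apply, smul_eq_mul]
    rw [hdphi y i]; ring
  have hterm : ∀ i, fderiv ℝ (fun y => fderiv ℝ (fun z => P z * φ₀ z) y
        (EuclideanSpace.single i 1)) x (EuclideanSpace.single i 1)
      = φ₀ x * fderiv ℝ (fun y => fderiv ℝ P y (EuclideanSpace.single i 1)) x
            (EuclideanSpace.single i 1)
        - 2 * φ₀ x * (fderiv ℝ P x (EuclideanSpace.single i 1) * X x i)
        + P x * φ₀ x * (X x i) ^ 2
        - P x * φ₀ x * fderiv ℝ X x (EuclideanSpace.single i 1) i := by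
    intro i
    rw [hfun i]
    have d2 : DifferentiableAt ℝ (fun y => φ₀ y * X y i) x := (hφd x).mul (hXi i x)
    rw [fderiv_fun_sub (f := fun y => φ₀ y * fderiv ℝ P y (EuclideanSpace.single i 1))
      (g := fun y => P y * (φ₀ y * X y i)) ((hφd x).mul (hA i x)) ((hPd x).mul d2)]
    simp only [ContinuousLinearMap.coe_sub', Pi.sub_apply]
    rw [fderiv_fun_mul (hφd x) (hA i x), fderiv_fun_mul (hPd x) d2, fderiv_fun_mul (hφd x) (hXi i x)]
    simp only [ContinuousLinearMap.add_apply, ContinuousLinearMap.smul_apply, smul_eq_mul]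
    rw [hdphi x i, hdX i]
    ring
  have hS : ∑ i, fderiv ℝ P x (EuclideanSpace.single i 1) * X x i = ⟪gradient P x, X x⟫ := by
    rw [PiLp.inner_apply]
    refine Finset.sum_congr rfl fun i _ => ?_
    rw [key]
    simp only [EuclideanSpace.inner_single_right, one_mul, RCLike.conj_to_real, RCLike.inner_apply]; ring
  have hT : ‖X x‖ ^ 2 = ∑ i, (X x i) ^ 2 := by
    rw [← real_inner_self_eq_norm_sq]
    simp only [PiLp.inner_apply, RCLike.inner_apply, sq, RCLike.conj_to_real]
  have hLP := hPharm x
  have hPWx := hPW x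
  unfold lap at hLP ⊢
  rw [Finset.sum_congr rfl fun i _ => hterm i, Finset.sum_sub_distrib, Finset.sum_add_distrib,
    Finset.sum_sub_distrib, ← Finset.mul_sum, ← Finset.mul_sum, ← Finset.mul_sum,
    ← Finset.mul_sum, hLP, hS]
  have hI : ⟪gradient P x, X x⟫ = -(W x * P x) / 2 := by linarith
  rw [hI, hT]
  unfold vdiv
  ring
end

section
/- For every smooth compactly supported φ on ℝⁿ (n ≥ 2), the inequality (∫ |∇φ|² dx)(∫ |φ|² dx) ≥ ((n−1)²/4)(∫ |φ(x)|²/|x| dx)² holds. -/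
open MeasureTheory Real

namespace Stmt14

variable {n : ℕ}

local notation "E" => EuclideanSpace ℝ (Fin n)

noncomputable def W (ε : ℝ) (y : EuclideanSpace ℝ (Fin n)) : ℝ := Real.sqrt (‖y‖^2 + ε^2)

lemma W_pos {ε : ℝ} (hε : 0 < ε) (x : E) : 0 < W ε x :=
  Real.sqrt_pos.2 (by positivity)

lemma W_sq {ε : ℝ} (hε : 0 < ε) (x : E) : (W ε x)^2 = ‖x‖^2 + ε^2 :=
  Real.sq_sqrt (by positivity)

lemma norm_le_W {ε : ℝ} (hε : 0 < ε) (x : E) : ‖x‖ ≤ W ε x := by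
  have h := Real.sqrt_le_sqrt (le_add_of_nonneg_right (sq_nonneg ε) : ‖x‖^2 ≤ ‖x‖^2 + ε^2)
  rwa [Real.sqrt_sq (norm_nonneg x)] at h

lemma continuous_W (ε : ℝ) : Continuous (W (n := n) ε) :=
  Real.continuous_sqrt.comp (((continuous_norm).pow 2).add continuous_const)

lemma hasFDerivAt_W (ε : ℝ) (hε : 0 < ε) (x : E) :
    HasFDerivAt (W ε) ((W ε x)⁻¹ • innerSL ℝ x) x := by
  have h0 : (0:ℝ) < ‖x‖^2 + ε^2 := by positivity
  have hs : 0 < W ε x := W_pos hε x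
  have h1 : HasFDerivAt (fun y : E => ‖y‖^2 + ε^2) ((2:ℝ) • innerSL ℝ x) x := by
    have := (hasFDerivAt_id x).norm_sq.add_const (ε^2)
    refine this.congr_fderiv ?_
    ext v
    simp [two_smul]
  have h2 := h1.sqrt h0.ne'
  refine h2.congr_fderiv ?_
  ext v
  simp only [ContinuousLinearMap.coe_smul', Pi.smul_apply, smul_eq_mul]
  rw [show Real.sqrt (‖x‖^2+ε^2) = W ε x from rfl]
  field_simp

noncomputable def V (ε : ℝ) (i : Fin n) (y : EuclideanSpace ℝ (Fin n)) : ℝ := y i * (W ε y)⁻¹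

lemma hasFDerivAt_V (ε : ℝ) (hε : 0 < ε) (i : Fin n) (x : E) :
    HasFDerivAt (V ε i)
      (x i • ((-((W ε x)^2)⁻¹) • ((W ε x)⁻¹ • innerSL ℝ x)) +
        (W ε x)⁻¹ • (EuclideanSpace.proj i : E →L[ℝ] ℝ)) x := by
  have hs : 0 < W ε x := W_pos hε x
  have hw := hasFDerivAt_W ε hε x
  have hinv := (hasDerivAt_inv hs.ne').comp_hasFDerivAt x hw
  have hu : HasFDerivAt (fun y : E => y i) (EuclideanSpace.proj i : E →L[ℝ] ℝ) x :=
    (EuclideanSpace.proj i : E →L[ℝ] ℝ).hasFDerivAt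
  exact hu.mul hinv

lemma differentiable_V (ε : ℝ) (hε : 0 < ε) (i : Fin n) : Differentiable ℝ (V ε i) :=
  fun x => (hasFDerivAt_V ε hε i x).differentiableAt

lemma fderiv_V_apply (ε : ℝ) (hε : 0 < ε) (i : Fin n) (x : E) :
    fderiv ℝ (V ε i) x (EuclideanSpace.single i 1) =
      (W ε x)⁻¹ - (x i)^2 * (((W ε x)^2)⁻¹ * (W ε x)⁻¹) := by
  rw [(hasFDerivAt_V ε hε i x).fderiv]
  have h1 : (EuclideanSpace.proj i : E →L[ℝ] ℝ) (EuclideanSpace.single i 1) = 1 := by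
    simp [EuclideanSpace.single_apply]
  simp only [ContinuousLinearMap.add_apply, ContinuousLinearMap.smul_apply,
    ContinuousLinearMap.neg_apply, innerSL_apply_apply, smul_eq_mul, h1,
    EuclideanSpace.inner_single_left, EuclideanSpace.inner_single_right]
  simp
  ring


lemma norm_sq_eq_sum (x : E) : ‖x‖^2 = ∑ i, (x i)^2 := by
  rw [EuclideanSpace.norm_eq, Real.sq_sqrt (Finset.sum_nonneg fun i _ => sq_nonneg _)]
  simp [sq_abs]

lemma sum_fderiv_V (ε : ℝ) (hε : 0 < ε) (x : E) :
    ∑ i, fderiv ℝ (V ε i) x (EuclideanSpace.single i 1) =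
      (n:ℝ) * (W ε x)⁻¹ - ‖x‖^2 * (((W ε x)^2)⁻¹ * (W ε x)⁻¹) := by
  simp only [fderiv_V_apply ε hε]
  rw [Finset.sum_sub_distrib, ← Finset.sum_mul, ← norm_sq_eq_sum]
  simp [mul_comm]

lemma div_lower (ε : ℝ) (hε : 0 < ε) (x : E) :
    ((n:ℝ) - 1) * (W ε x)⁻¹ ≤ ∑ i, fderiv ℝ (V ε i) x (EuclideanSpace.single i 1) := by
  rw [sum_fderiv_V ε hε]
  have hs := W_pos hε x
  have hsq := W_sq hε x
  have hinv : (W ε x) * (W ε x)⁻¹ = 1 := mul_inv_cancel₀ hs.ne'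
  have h2 : ((W ε x)^2) * ((W ε x)^2)⁻¹ = 1 := mul_inv_cancel₀ (by positivity)
  have hn : ‖x‖^2 ≤ (W ε x)^2 := by rw [hsq]; nlinarith
  have hinvpos : 0 < (W ε x)⁻¹ := by positivity
  have h3 : ‖x‖^2 * (((W ε x)^2)⁻¹ * (W ε x)⁻¹) ≤ (W ε x)⁻¹ := by
    rw [← mul_assoc]
    have : ‖x‖^2 * ((W ε x)^2)⁻¹ ≤ 1 := by
      rw [← h2]
      exact mul_le_mul_of_nonneg_right hn (by positivity)
    nlinarith
  nlinarith


variable {φ : EuclideanSpace ℝ (Fin n) → ℝ}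

lemma fderiv_sq (hφ : Differentiable ℝ φ) (x : E) :
    fderiv ℝ (fun y => φ y ^ 2) x = (2 * φ x) • fderiv ℝ φ x := by
  have h := ((hφ x).hasFDerivAt.mul (hφ x).hasFDerivAt)
  have he : (fun y => φ y ^ 2) = fun y => φ y * φ y := by funext y; ring
  rw [he, show (fun y => φ y * φ y) = φ * φ from rfl, h.fderiv]
  ext v
  simp only [ContinuousLinearMap.add_apply, ContinuousLinearMap.smul_apply, smul_eq_mul,
    ContinuousLinearMap.coe_smul', Pi.smul_apply]
  ring

lemma integrable_phi_mul (hφ : Continuous φ) (hφc : HasCompactSupport φ) {g : E → ℝ}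
    (hg : Continuous g) : Integrable (fun x => φ x * g x) := by
  exact (hφ.mul hg).integrable_of_hasCompactSupport hφc.mul_right

lemma continuous_fderiv_V (ε : ℝ) (hε : 0 < ε) (i : Fin n) :
    Continuous (fun x : E => fderiv ℝ (V ε i) x (EuclideanSpace.single i 1)) := by
  have he : (fun x : E => fderiv ℝ (V ε i) x (EuclideanSpace.single i 1)) =
      fun x => (W ε x)⁻¹ - (x i)^2 * (((W ε x)^2)⁻¹ * (W ε x)⁻¹) := by
    funext x; exact fderiv_V_apply ε hε i x
  rw [he]
  have hWinv : Continuous fun x : E => (W ε x)⁻¹ :=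
    (continuous_W ε).inv₀ fun x => (W_pos hε x).ne'
  have hWinv2 : Continuous fun x : E => ((W ε x)^2)⁻¹ :=
    ((continuous_W ε).pow 2).inv₀ fun x => pow_ne_zero 2 (W_pos hε x).ne'
  have hproj : Continuous fun x : E => x i := (EuclideanSpace.proj i : E →L[ℝ] ℝ).continuous
  exact hWinv.sub (((hproj.pow 2)).mul (hWinv2.mul hWinv))

lemma continuous_V (ε : ℝ) (hε : 0 < ε) (i : Fin n) : Continuous (V ε i) :=
  (EuclideanSpace.proj i : E →L[ℝ] ℝ).continuous.mul
    ((continuous_W ε).inv₀ fun x => (W_pos hε x).ne')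

lemma sum_clm (L : E →L[ℝ] ℝ) (x : E) : ∑ i, L (EuclideanSpace.single i 1) * x i = L x := by
  have hx : ∑ i, x i • (EuclideanSpace.single i (1:ℝ)) = x := by
    have := (EuclideanSpace.basisFun (Fin n) ℝ).sum_repr x
    simpa [EuclideanSpace.basisFun_apply, EuclideanSpace.basisFun_repr] using this
  calc ∑ i, L (EuclideanSpace.single i 1) * x i
      = ∑ i, L (x i • EuclideanSpace.single i 1) := by
        refine Finset.sum_congr rfl fun i _ => ?_
        rw [L.map_smul]; simp [mul_comm]
    _ = L x := by rw [← _root_.map_sum L _ Finset.univ, hx]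

lemma core (hφ : ContDiff ℝ (⊤ : ℕ∞) φ) (hφc : HasCompactSupport φ) (ε : ℝ) (hε : 0 < ε) :
    ((n:ℝ) - 1) * ∫ x, φ x ^ 2 / W ε x ≤ ∫ x, 2 * |φ x| * ‖fderiv ℝ φ x‖ := by
  have hφd : Differentiable ℝ φ := hφ.differentiable (by simp)
  have hφcont : Continuous φ := hφ.continuous
  have hfc : Continuous (fun x : E => fderiv ℝ φ x) := hφ.continuous_fderiv (by simp)
  have hfcv : ∀ v : E, Continuous fun x => fderiv ℝ φ x v := fun v =>
    (ContinuousLinearMap.apply ℝ ℝ v).continuous.comp hfc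
  have hnormfc : Continuous fun x : E => ‖fderiv ℝ φ x‖ := hfc.norm
  have hWinv : Continuous fun x : E => (W ε x)⁻¹ :=
    (continuous_W ε).inv₀ fun x => (W_pos hε x).ne'
  -- integrability of all players
  have int1 : ∀ i : Fin n, Integrable fun x => φ x ^ 2 * fderiv ℝ (V ε i) x
      (EuclideanSpace.single i 1) := by
    intro i
    have he : (fun x => φ x ^ 2 * fderiv ℝ (V ε i) x (EuclideanSpace.single i 1)) =
        fun x => φ x * (φ x * fderiv ℝ (V ε i) x (EuclideanSpace.single i 1)) := by
      funext x; ring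
    rw [he]
    exact integrable_phi_mul hφcont hφc (hφcont.mul (continuous_fderiv_V ε hε i))
  have int2 : ∀ i : Fin n, Integrable fun x =>
      fderiv ℝ (fun y => φ y ^ 2) x (EuclideanSpace.single i 1) * V ε i x := by
    intro i
    have he : (fun x => fderiv ℝ (fun y => φ y ^ 2) x (EuclideanSpace.single i 1) * V ε i x) =
        fun x => φ x * (2 * fderiv ℝ φ x (EuclideanSpace.single i 1) * V ε i x) := by
      funext x; rw [fderiv_sq hφd]; simp only [ContinuousLinearMap.coe_smul', Pi.smul_apply,
        smul_eq_mul]; ring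
    rw [he]
    exact integrable_phi_mul hφcont hφc
      ((continuous_const.mul (hfcv _)).mul (continuous_V ε hε i))
  have int3 : ∀ i : Fin n, Integrable fun x => φ x ^ 2 * V ε i x := by
    intro i
    have he : (fun x => φ x ^ 2 * V ε i x) = fun x => φ x * (φ x * V ε i x) := by
      funext x; ring
    rw [he]
    exact integrable_phi_mul hφcont hφc (hφcont.mul (continuous_V ε hε i))
  -- integration by parts in each direction
  have ibp : ∀ i : Fin n, ∫ x, φ x ^ 2 * fderiv ℝ (V ε i) x (EuclideanSpace.single i 1) =
      -∫ x, fderiv ℝ (fun y => φ y ^ 2) x (EuclideanSpace.single i 1) * V ε i x := by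
    intro i
    exact integral_mul_fderiv_eq_neg_fderiv_mul_of_integrable (int2 i) (int1 i) (int3 i)
      (fun x _ => (hφd x).pow 2) (fun x _ => differentiable_V ε hε i x)
  set DS : E → ℝ := fun x => (n:ℝ) * (W ε x)⁻¹ - ‖x‖^2 * (((W ε x)^2)⁻¹ * (W ε x)⁻¹) with hDS
  have hWinv2 : Continuous fun x : E => ((W ε x)^2)⁻¹ :=
    ((continuous_W ε).pow 2).inv₀ fun x => pow_ne_zero 2 (W_pos hε x).ne'
  have hDScont : Continuous DS :=
    (continuous_const.mul hWinv).sub (((continuous_norm).pow 2).mul (hWinv2.mul hWinv))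
  have intDS : Integrable fun x => φ x ^ 2 * DS x := by
    have he : (fun x => φ x ^ 2 * DS x) = fun x => φ x * (φ x * DS x) := by funext x; ring
    rw [he]; exact integrable_phi_mul hφcont hφc (hφcont.mul hDScont)
  have intLHS : Integrable fun x => φ x ^ 2 / W ε x := by
    have he : (fun x => φ x ^ 2 / W ε x) = fun x => φ x * (φ x * (W ε x)⁻¹) := by
      funext x; rw [div_eq_mul_inv]; ring
    rw [he]; exact integrable_phi_mul hφcont hφc (hφcont.mul hWinv)
  have hfxx : Continuous fun x : E => fderiv ℝ φ x x := hfc.clm_apply continuous_id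
  have intH : Integrable fun x => (2 * φ x * fderiv ℝ φ x x) * (W ε x)⁻¹ := by
    have he : (fun x => (2 * φ x * fderiv ℝ φ x x) * (W ε x)⁻¹) =
        fun x => φ x * (2 * fderiv ℝ φ x x * (W ε x)⁻¹) := by funext x; ring
    rw [he]; exact integrable_phi_mul hφcont hφc ((continuous_const.mul hfxx).mul hWinv)
  have intRHS : Integrable fun x => 2 * |φ x| * ‖fderiv ℝ φ x‖ := by
    refine ((continuous_const.mul hφcont.abs).mul hnormfc).integrable_of_hasCompactSupport ?_
    have h1 : HasCompactSupport fun x => |φ x| := hφc.abs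
    have h2 : HasCompactSupport fun x => |φ x| * ‖fderiv ℝ φ x‖ := h1.mul_right
    have he : (fun x => 2 * |φ x| * ‖fderiv ℝ φ x‖) =
        fun x => (2:ℝ) * (|φ x| * ‖fderiv ℝ φ x‖) := by funext x; ring
    change HasCompactSupport (fun x => 2 * |φ x| * ‖fderiv ℝ φ x‖)
    rw [he]
    exact h2.mul_left
  -- step 2 : lower bound on the divergence integral
  have step2 : ∫ x, ((n:ℝ) - 1) * (φ x ^ 2 / W ε x) ≤ ∫ x, φ x ^ 2 * DS x := by
    refine integral_mono (intLHS.const_mul _) intDS fun x => ?_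
    have h1 := div_lower (n := n) ε hε x
    rw [sum_fderiv_V ε hε] at h1
    have h2 : φ x ^ 2 / W ε x = φ x ^ 2 * (W ε x)⁻¹ := div_eq_mul_inv _ _
    have h3 : ((n:ℝ) - 1) * (φ x ^ 2 / W ε x) = φ x ^ 2 * (((n:ℝ) - 1) * (W ε x)⁻¹) := by
      rw [h2]; ring
    rw [h3]
    exact mul_le_mul_of_nonneg_left h1 (sq_nonneg _)
  have step3 : ∫ x, φ x ^ 2 * DS x =
      ∑ i, ∫ x, φ x ^ 2 * fderiv ℝ (V ε i) x (EuclideanSpace.single i 1) := by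
    rw [← integral_finset_sum Finset.univ (fun i _ => int1 i)]
    congr 1; funext x
    rw [← Finset.mul_sum, sum_fderiv_V ε hε]
  have step4 : ∑ i, ∫ x, fderiv ℝ (fun y => φ y ^ 2) x (EuclideanSpace.single i 1) * V ε i x =
      ∫ x, (2 * φ x * fderiv ℝ φ x x) * (W ε x)⁻¹ := by
    rw [← integral_finset_sum Finset.univ (fun i _ => int2 i)]
    congr 1; funext x
    have he : ∀ i : Fin n, fderiv ℝ (fun y => φ y ^ 2) x (EuclideanSpace.single i 1) * V ε i x =
        (2 * φ x * (W ε x)⁻¹) * (fderiv ℝ φ x (EuclideanSpace.single i 1) * x i) := by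
      intro i
      rw [fderiv_sq hφd]
      simp only [ContinuousLinearMap.coe_smul', Pi.smul_apply, smul_eq_mul, V]
      ring
    rw [Finset.sum_congr rfl fun i _ => he i, ← Finset.mul_sum, sum_clm]
    ring
  have bound : ∀ x, |(2 * φ x * fderiv ℝ φ x x) * (W ε x)⁻¹| ≤ 2 * |φ x| * ‖fderiv ℝ φ x‖ := by
    intro x
    have h1 : |fderiv ℝ φ x x| ≤ ‖fderiv ℝ φ x‖ * ‖x‖ := (fderiv ℝ φ x).le_opNorm x
    have h2 : ‖x‖ ≤ W ε x := norm_le_W hε x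
    have h3 : 0 < W ε x := W_pos hε x
    have h4 : 0 ≤ (W ε x)⁻¹ := by positivity
    rw [abs_mul, abs_mul, abs_mul, abs_of_pos (show (0:ℝ) < 2 by norm_num),
      abs_of_nonneg h4]
    have h5 : ‖x‖ * (W ε x)⁻¹ ≤ 1 := by
      rw [← mul_inv_cancel₀ h3.ne']
      exact mul_le_mul_of_nonneg_right h2 h4
    calc 2 * |φ x| * |fderiv ℝ φ x x| * (W ε x)⁻¹
        ≤ 2 * |φ x| * (‖fderiv ℝ φ x‖ * ‖x‖) * (W ε x)⁻¹ := by
          have : (0:ℝ) ≤ 2 * |φ x| := by positivity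
          exact mul_le_mul_of_nonneg_right (mul_le_mul_of_nonneg_left h1 this) h4
      _ = (2 * |φ x| * ‖fderiv ℝ φ x‖) * (‖x‖ * (W ε x)⁻¹) := by ring
      _ ≤ (2 * |φ x| * ‖fderiv ℝ φ x‖) * 1 := by
          exact mul_le_mul_of_nonneg_left h5 (by positivity)
      _ = 2 * |φ x| * ‖fderiv ℝ φ x‖ := by ring
  have step5 : -∫ x, (2 * φ x * fderiv ℝ φ x x) * (W ε x)⁻¹ ≤
      ∫ x, 2 * |φ x| * ‖fderiv ℝ φ x‖ := by
    calc -∫ x, (2 * φ x * fderiv ℝ φ x x) * (W ε x)⁻¹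
        ≤ |∫ x, (2 * φ x * fderiv ℝ φ x x) * (W ε x)⁻¹| := neg_le_abs _
      _ ≤ ∫ x, |(2 * φ x * fderiv ℝ φ x x) * (W ε x)⁻¹| := by
          have := norm_integral_le_integral_norm
            (μ := volume) (fun x => (2 * φ x * fderiv ℝ φ x x) * (W ε x)⁻¹)
          simpa only [Real.norm_eq_abs] using this
      _ ≤ ∫ x, 2 * |φ x| * ‖fderiv ℝ φ x‖ := integral_mono intH.abs intRHS bound
  calc ((n:ℝ) - 1) * ∫ x, φ x ^ 2 / W ε x
      = ∫ x, ((n:ℝ) - 1) * (φ x ^ 2 / W ε x) := (integral_const_mul _ _).symm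
    _ ≤ ∫ x, φ x ^ 2 * DS x := step2
    _ = ∑ i, ∫ x, φ x ^ 2 * fderiv ℝ (V ε i) x (EuclideanSpace.single i 1) := step3
    _ = ∑ i, -∫ x, fderiv ℝ (fun y => φ y ^ 2) x (EuclideanSpace.single i 1) * V ε i x :=
        Finset.sum_congr rfl fun i _ => ibp i
    _ = -∑ i, ∫ x, fderiv ℝ (fun y => φ y ^ 2) x (EuclideanSpace.single i 1) * V ε i x :=
        Finset.sum_neg_distrib _
    _ = -∫ x, (2 * φ x * fderiv ℝ φ x x) * (W ε x)⁻¹ := by rw [step4]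
    _ ≤ ∫ x, 2 * |φ x| * ‖fderiv ℝ φ x‖ := step5


lemma nontrivial_E (hn : 2 ≤ n) : Nontrivial (EuclideanSpace ℝ (Fin n)) := by
  have h0 : 0 < n := by omega
  refine ⟨0, EuclideanSpace.single ⟨0, h0⟩ 1, ?_⟩
  intro h
  have := congrArg (fun z : EuclideanSpace ℝ (Fin n) => z ⟨0, h0⟩) h
  simp [EuclideanSpace.single_apply] at this

lemma limit_le (hn : 2 ≤ n) (hφcont : Continuous φ) (hφc : HasCompactSupport φ)
    {c : ℝ} (hc : 0 ≤ c) (h : ∀ ε : ℝ, 0 < ε → ∫ x, φ x ^ 2 / W ε x ≤ c) :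
    ∫ x, φ x ^ 2 / ‖x‖ ≤ c := by
  haveI := nontrivial_E hn
  set f : E → ℝ := fun x => φ x ^ 2 / ‖x‖ with hf
  set F : ℕ → E → ENNReal := fun k x => ENNReal.ofReal (φ x ^ 2 / W (1/(k+1:ℝ)) x) with hF
  have hεk : ∀ k : ℕ, (0:ℝ) < 1/(k+1:ℝ) := fun k => by positivity
  have hWcont : ∀ k : ℕ, Continuous fun x : E => φ x ^ 2 / W (1/(k+1:ℝ)) x := fun k =>
    (hφcont.pow 2).div (continuous_W _) fun x => (W_pos (hεk k) x).ne'
  have hFmeas : ∀ k, Measurable (F k) := fun k =>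
    ENNReal.measurable_ofReal.comp (hWcont k).measurable
  have hFmono : Monotone F := by
    intro k m hkm
    intro x
    apply ENNReal.ofReal_le_ofReal
    apply div_le_div_of_nonneg_left (sq_nonneg _) (W_pos (hεk m) x)
    · rw [W, W]
      apply Real.sqrt_le_sqrt
      have : (1/(m+1:ℝ)) ≤ 1/(k+1:ℝ) := by
        apply one_div_le_one_div_of_le (by positivity)
        exact_mod_cast Nat.succ_le_succ hkm
      nlinarith [hεk m, hεk k]
  have htendsto : ∀ x : E, x ≠ 0 →
      Filter.Tendsto (fun k => F k x) Filter.atTop (nhds (ENNReal.ofReal (f x))) := by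
    intro x hx
    have hnx : 0 < ‖x‖ := norm_pos_iff.2 hx
    have h1 : Filter.Tendsto (fun k : ℕ => (1/(k+1:ℝ))) Filter.atTop (nhds 0) :=
      tendsto_one_div_add_atTop_nhds_zero_nat
    have h2 : Filter.Tendsto (fun k : ℕ => W (1/(k+1:ℝ)) x) Filter.atTop (nhds ‖x‖) := by
      have h3 : Filter.Tendsto (fun k : ℕ => ‖x‖^2 + (1/(k+1:ℝ))^2) Filter.atTop
          (nhds (‖x‖^2 + 0^2)) := tendsto_const_nhds.add (h1.pow 2)
      have h5 := (Real.continuous_sqrt.tendsto (‖x‖^2 + 0^2)).comp h3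
      have h6 : Real.sqrt (‖x‖^2 + 0^2) = ‖x‖ := by
        simpa using Real.sqrt_sq hnx.le
      rw [h6] at h5
      exact h5.congr fun k => rfl
    have h4 : Filter.Tendsto (fun k : ℕ => φ x ^ 2 / W (1/(k+1:ℝ)) x) Filter.atTop
        (nhds (φ x ^ 2 / ‖x‖)) := Filter.Tendsto.div tendsto_const_nhds h2 hnx.ne'
    exact (ENNReal.continuous_ofReal.tendsto _).comp h4
  have hsup : ∀ x : E, x ≠ 0 → (⨆ k, F k x) = ENNReal.ofReal (f x) := by
    intro x hx
    have hmono : Monotone fun k => F k x := fun k m hkm => hFmono hkm x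
    exact tendsto_nhds_unique (tendsto_atTop_iSup hmono) (htendsto x hx)
  have hae : (fun x => ENNReal.ofReal (f x)) =ᵐ[volume] fun x => ⨆ k, F k x := by
    have h0 : (volume : Measure E) {0} = 0 := measure_singleton 0
    filter_upwards [measure_eq_zero_iff_ae_notMem.mp h0] with x hx
    exact (hsup x hx).symm
  have hlin : ∫⁻ x, ENNReal.ofReal (f x) = ⨆ k, ∫⁻ x, F k x := by
    rw [lintegral_congr_ae hae, lintegral_iSup hFmeas hFmono]
  have hIk : ∀ k : ℕ, ∫⁻ x, F k x ≤ ENNReal.ofReal c := by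
    intro k
    have hint : Integrable fun x => φ x ^ 2 / W (1/(k+1:ℝ)) x := by
      have he : (fun x => φ x ^ 2 / W (1/(k+1:ℝ)) x) =
          fun x => φ x * (φ x * (W (1/(k+1:ℝ)) x)⁻¹) := by
        funext x; rw [div_eq_mul_inv]; ring
      rw [he]
      exact integrable_phi_mul hφcont hφc (hφcont.mul
        ((continuous_W _).inv₀ fun x => (W_pos (hεk k) x).ne'))
    have hnn : 0 ≤ᵐ[volume] fun x => φ x ^ 2 / W (1/(k+1:ℝ)) x := by
      filter_upwards with x
      exact div_nonneg (sq_nonneg _) (W_pos (hεk k) x).le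
    rw [hF]
    dsimp only
    rw [← ofReal_integral_eq_lintegral_ofReal hint hnn]
    exact ENNReal.ofReal_le_ofReal (h _ (hεk k))
  have hbound : ∫⁻ x, ENNReal.ofReal (f x) ≤ ENNReal.ofReal c := by
    rw [hlin]; exact iSup_le hIk
  have hfnn : ∀ x, 0 ≤ f x := fun x => div_nonneg (sq_nonneg _) (norm_nonneg _)
  have hfmeas : AEStronglyMeasurable f volume :=
    ((hφcont.pow 2).measurable.div continuous_norm.measurable).aestronglyMeasurable
  have heq : ∫ x, f x = (∫⁻ x, ENNReal.ofReal (f x)).toReal := by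
    rw [integral_eq_lintegral_of_nonneg_ae (Filter.Eventually.of_forall hfnn) hfmeas]
  rw [heq]
  exact ENNReal.toReal_le_of_le_ofReal hc hbound

end Stmt14

lemma amgm {a b t : ℝ} (ht : 0 < t) : 2*a*b ≤ t*a^2 + b^2/t := by
  rw [div_eq_mul_inv]
  have h := mul_nonneg (inv_nonneg.2 ht.le) (sq_nonneg (t*a - b))
  have hc : t * t⁻¹ = 1 := mul_inv_cancel₀ ht.ne'
  nlinarith [h, hc, sq_nonneg (t*a-b)]

lemma alg {a F G : ℝ} (ha : 0 ≤ a) (hF : 0 ≤ F) (hG : 0 ≤ G)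
    (h : ∀ t : ℝ, 0 < t → a ≤ t*F + G/t) : a^2 ≤ 4*(G*F) := by
  rcases eq_or_lt_of_le ha with h0 | hapos
  · rw [← h0]; nlinarith [mul_nonneg hG hF]
  · rcases eq_or_lt_of_le hF with hF0 | hFpos
    · exfalso
      have ht : (0:ℝ) < G / a + 1 := by positivity
      have h1 := h _ ht
      rw [← hF0] at h1
      have h5 : a ≤ G / (G / a + 1) := by simpa using h1
      rw [le_div_iff₀ ht] at h5
      have h3 : a * (G / a + 1) = G + a := by field_simp
      rw [h3] at h5
      linarith
    · have ht : (0:ℝ) < a / (2 * F) := by positivity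
      have h1 := h _ ht
      have h2 : a / (2 * F) * F = a / 2 := by field_simp
      have h3 : G / (a / (2 * F)) = 2 * F * G / a := by field_simp
      rw [h2, h3] at h1
      have h4 : a / 2 ≤ 2 * F * G / a := by linarith
      rw [div_le_div_iff₀ (by norm_num) hapos] at h4
      nlinarith

open Stmt14 in
theorem stmt_14 {n : ℕ} (hn : 2 ≤ n) (φ : EuclideanSpace ℝ (Fin n) → ℝ)
    (hφ : ContDiff ℝ (⊤ : ℕ∞) φ) (hφc : HasCompactSupport φ) :
    (∫ x, ‖gradient φ x‖ ^ 2) * (∫ x, (φ x) ^ 2) ≥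
      (((n : ℝ) - 1) ^ 2 / 4) * (∫ x, (φ x) ^ 2 / ‖x‖) ^ 2 := by
  have hφd : Differentiable ℝ φ := hφ.differentiable (by simp)
  have hφcont : Continuous φ := hφ.continuous
  have hfc : Continuous (fun x : EuclideanSpace ℝ (Fin n) => fderiv ℝ φ x) :=
    hφ.continuous_fderiv (by simp)
  have hgradeq : ∀ x, ‖gradient φ x‖ = ‖fderiv ℝ φ x‖ := by
    intro x
    rw [gradient]
    exact LinearIsometryEquiv.norm_map _ _
  have hGeq : (∫ x, ‖gradient φ x‖ ^ 2) = ∫ x, ‖fderiv ℝ φ x‖ ^ 2 := by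
    congr 1; funext x; rw [hgradeq]
  rw [hGeq]
  obtain ⟨Fφ, hFφ⟩ : ∃ r, (∫ x, (φ x) ^ 2) = r := ⟨_, rfl⟩
  obtain ⟨G, hG⟩ : ∃ r, (∫ x, ‖fderiv ℝ φ x‖ ^ 2) = r := ⟨_, rfl⟩
  obtain ⟨I, hI⟩ : ∃ r, (∫ x, (φ x) ^ 2 / ‖x‖) = r := ⟨_, rfl⟩
  obtain ⟨J, hJ⟩ : ∃ r, (∫ x, 2 * |φ x| * ‖fderiv ℝ φ x‖) = r := ⟨_, rfl⟩
  rw [hFφ, hG, hI]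
  -- integrability facts
  have hcsf : HasCompactSupport (fun x : EuclideanSpace ℝ (Fin n) => fderiv ℝ φ x) :=
    hφc.fderiv (𝕜 := ℝ)
  have hcsn2 : HasCompactSupport (fun x : EuclideanSpace ℝ (Fin n) => ‖fderiv ℝ φ x‖ ^ 2) :=
    hcsf.comp_left
      (g := fun y : EuclideanSpace ℝ (Fin n) →L[ℝ] ℝ => ‖y‖ ^ 2) (by simp)
  have intn2 : Integrable (fun x : EuclideanSpace ℝ (Fin n) => ‖fderiv ℝ φ x‖ ^ 2) :=
    ((hfc.norm.pow 2)).integrable_of_hasCompactSupport hcsn2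
  have intphi2 : Integrable (fun x : EuclideanSpace ℝ (Fin n) => φ x ^ 2) := by
    have he : (fun x : EuclideanSpace ℝ (Fin n) => φ x ^ 2) = fun x => φ x * φ x := by
      funext x; ring
    rw [he]
    exact integrable_phi_mul hφcont hφc hφcont
  have hF0 : 0 ≤ Fφ := hFφ ▸ integral_nonneg fun x => sq_nonneg _
  have hG0 : 0 ≤ G := hG ▸ integral_nonneg fun x => sq_nonneg _
  have hI0 : 0 ≤ I := hI ▸ integral_nonneg fun x => div_nonneg (sq_nonneg _) (norm_nonneg _)
  have hJ0 : 0 ≤ J := hJ ▸ integral_nonneg fun x => by positivity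
  have hn1 : (1:ℝ) ≤ (n:ℝ) - 1 := by
    have : (2:ℝ) ≤ (n:ℝ) := by exact_mod_cast hn
    linarith
  have hn1pos : (0:ℝ) < (n:ℝ) - 1 := by linarith
  -- (n-1) I ≤ J via core + limit
  have hkey : ((n:ℝ) - 1) * I ≤ J := by
    have hc : 0 ≤ J / ((n:ℝ) - 1) := by positivity
    have hlim : I ≤ J / ((n:ℝ) - 1) := by
      rw [← hI]
      apply limit_le hn hφcont hφc hc
      intro ε hε
      have h1 := core hφ hφc ε hε
      rw [hJ] at h1
      rw [le_div_iff₀ hn1pos, mul_comm]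
      exact h1
    calc ((n:ℝ) - 1) * I ≤ ((n:ℝ) - 1) * (J / ((n:ℝ) - 1)) :=
          mul_le_mul_of_nonneg_left hlim hn1pos.le
      _ = J := by field_simp
  -- J ≤ t Fφ + G / t for all t > 0
  have hJle : ∀ t : ℝ, 0 < t → J ≤ t * Fφ + G / t := by
    intro t ht
    have hint : Integrable fun x : EuclideanSpace ℝ (Fin n) =>
        t * φ x ^ 2 + ‖fderiv ℝ φ x‖ ^ 2 / t :=
      (intphi2.const_mul t).add (intn2.div_const t)
    have hmono : ∀ x, 2 * |φ x| * ‖fderiv ℝ φ x‖ ≤ t * φ x ^ 2 + ‖fderiv ℝ φ x‖ ^ 2 / t := by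
      intro x
      have h := amgm (a := |φ x|) (b := ‖fderiv ℝ φ x‖) ht
      rwa [sq_abs] at h
    have hintJ : Integrable fun x : EuclideanSpace ℝ (Fin n) =>
        2 * |φ x| * ‖fderiv ℝ φ x‖ := by
      refine ((continuous_const.mul hφcont.abs).mul hfc.norm).integrable_of_hasCompactSupport ?_
      have h2 : HasCompactSupport fun x => |φ x| * ‖fderiv ℝ φ x‖ := hφc.abs.mul_right
      have he : (fun x : EuclideanSpace ℝ (Fin n) => 2 * |φ x| * ‖fderiv ℝ φ x‖) =
          fun x => (2:ℝ) * (|φ x| * ‖fderiv ℝ φ x‖) := by funext x; ring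
      change HasCompactSupport (fun x => 2 * |φ x| * ‖fderiv ℝ φ x‖)
      rw [he]
      exact h2.mul_left
    calc J = ∫ x, 2 * |φ x| * ‖fderiv ℝ φ x‖ := hJ.symm
      _ ≤ ∫ x, (t * φ x ^ 2 + ‖fderiv ℝ φ x‖ ^ 2 / t) := integral_mono hintJ hint hmono
      _ = t * Fφ + G / t := by
          rw [integral_add (intphi2.const_mul t) (intn2.div_const t),
            integral_const_mul, integral_div, hFφ, hG]
  have hat : ∀ t : ℝ, 0 < t → ((n:ℝ) - 1) * I ≤ t * Fφ + G / t := fun t ht =>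
    hkey.trans (hJle t ht)
  have hmain := alg (mul_nonneg hn1pos.le hI0) hF0 hG0 hat
  rw [ge_iff_le]
  nlinarith [hmain]
end
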